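/- arXiv:2112.13594 — 2 statements merged into one kernel-verified Lean document; each statement's English description precedes it below -/
import Mathlib

section
/- Let P̃ be the universal guessing distribution on 𝒳̂^n. Then lim_{n→∞} max_{x ∈ 𝒳^n} | (1/n) log₂ P̃[S(x)] + R(D, P̂_x) | = 0; that is, uniformly in x ∈ 𝒳^n, the probability P̃[S(x)] = Σ_{x̂ ∈ S(x)} P̃(x̂) equals 2^{−n R(D, P̂_x)} up to factors that are sub-exponential in n. -/
open scoped BigOperators Classical
open Filter

section Defs

/-- A probability mass function on a finite alphabet. -/
def IsPMF {α : Type*} [Fintype α] (p : α → ℝ) : Prop :=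
  (∀ a, 0 ≤ p a) ∧ ∑ a, p a = 1

/-- A conditional probability mass function (a channel / test channel). -/
def IsCondPMF {α β : Type*} [Fintype α] [Fintype β] (W : α → β → ℝ) : Prop :=
  ∀ a, IsPMF (W a)

/-- Base-2 Kullback–Leibler divergence `D(Q‖P)`. -/
noncomputable def klDiv2 {α : Type*} [Fintype α] (Q P : α → ℝ) : ℝ :=
  ∑ a, Q a * Real.logb 2 (Q a / P a)

/-- Base-2 mutual information `I(X;X̂)` of the joint law `Q(a) W(b|a)`. -/
noncomputable def mutInf2 {α β : Type*} [Fintype α] [Fintype β]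
    (Q : α → ℝ) (W : α → β → ℝ) : ℝ :=
  ∑ a, ∑ b, Q a * W a b * Real.logb 2 (W a b / (∑ a', Q a' * W a' b))

/-- The rate–distortion function `R(D,Q)` (base 2). -/
noncomputable def RD {X Xh : Type*} [Fintype X] [Fintype Xh]
    (d : X → Xh → ℝ) (D : ℝ) (Q : X → ℝ) : ℝ :=
  sInf { r | ∃ V : X → Xh → ℝ, IsCondPMF V ∧
    (∑ x, ∑ xh, Q x * V x xh * d x xh) ≤ D ∧ r = mutInf2 Q V }

/-- Empirical distribution of a sequence. -/
noncomputable def empDist {X : Type*} [Fintype X] {n : ℕ} (x : Fin n → X) : X → ℝ :=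
  fun a => ((Finset.univ.filter (fun i => x i = a)).card : ℝ) / n

/-- Base-2 empirical entropy of a sequence. -/
noncomputable def empEnt {X : Type*} [Fintype X] {n : ℕ} (x : Fin n → X) : ℝ :=
  - ∑ a, empDist x a * Real.logb 2 (empDist x a)

/-- Additive (per-block) distortion between sequences. -/
noncomputable def dSeq {X Xh : Type*} {n : ℕ} (d : X → Xh → ℝ)
    (x : Fin n → X) (xh : Fin n → Xh) : ℝ :=
  ∑ i, d (x i) (xh i)

/-- The universal guessing distribution `P̃(x̂) ∝ 2^{-n Ĥ_x̂}` on `𝒳̂ⁿ`. -/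
noncomputable def univDist {Xh : Type*} [Fintype Xh] {n : ℕ} (xh : Fin n → Xh) : ℝ :=
  (2 : ℝ) ^ (-(n : ℝ) * empEnt xh) / ∑ z : Fin n → Xh, (2 : ℝ) ^ (-(n : ℝ) * empEnt z)

/-- Probability of the distortion ball `S(x)` under the universal distribution. -/
noncomputable def univDistBall {X Xh : Type*} [Fintype Xh] {n : ℕ}
    (d : X → Xh → ℝ) (D : ℝ) (x : Fin n → X) : ℝ :=
  ∑ xh ∈ Finset.univ.filter (fun xh : Fin n → Xh => dSeq d x xh ≤ (n : ℝ) * D), univDist xh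

end Defs

/-!
Write `P̃[S(x)] = B / Z` with `B = ∑_{x̂ ∈ S(x)} 2^{-n Ĥ(x̂)}` and `Z = ∑_{x̂} 2^{-n Ĥ(x̂)}`. Since
`2^{-n Ĥ(x̂)} = ∏ᵢ P̂_x̂(x̂ᵢ)` is the largest i.i.d. likelihood of `x̂`, and there are at most
`(n + 1)^{|𝒳̂|}` types, `1 ≤ Z ≤ (n + 1)^{|𝒳̂|}`.

Upper bound: if `V` is the conditional type of `x̂` given `x`, then
`2^{-n Ĥ(x̂)} = 2^{-n I(P̂_x, V)} ∏ᵢ V(x̂ᵢ | xᵢ)`, and `V` is a feasible test channel when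
`x̂ ∈ S(x)`, so `I(P̂_x, V) ≥ R(D, P̂_x)`. Within one joint type the weights `∏ᵢ V(x̂ᵢ | xᵢ)` sum
to at most one, so `B ≤ (n + 1)^{|𝒳 × 𝒳̂|} 2^{-n R}`.

Lower bound: draw `x̂` through a nearly optimal test channel, mixed with a small weight `t` of the
distortion-minimising deterministic channel. By Markov's inequality `x̂ ∈ S(x)` with probability at
least `t`; by Chebyshev's inequality the log-likelihood ratio against a smoothed output law `q`
exceeds `n (R + ε)` with probability `O(1 / n)`. On the remaining event the channel law of `x̂` is
at most `2^{n (R + ε)} ∏ᵢ q(x̂ᵢ) ≤ 2^{n (R + ε)} 2^{-n Ĥ(x̂)}`, so `B ≥ (t / 2) 2^{-n (R + ε)}`.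
-/

open Finset Real Topology

section KullbackLeibler

variable {β : Type*} [Fintype β]

lemma sub_le_mul_log_div {p q : ℝ} (hp : 0 ≤ p) (hq : 0 ≤ q) (hpq : 0 < p → 0 < q) :
    p - q ≤ p * log (p / q) := by
  rcases hp.eq_or_lt with rfl | hp
  · simpa using hq
  have hq := hpq hp
  have h := mul_le_mul_of_nonneg_left (log_le_sub_one_of_pos (div_pos hq hp)) hp.le
  rw [log_div hq.ne' hp.ne', mul_sub, mul_sub, mul_one, mul_div_cancel₀ _ hp.ne'] at h
  rw [log_div hp.ne' hq.ne']
  linarith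

lemma mul_logb_div_eq {p q : ℝ} (hp : 0 ≤ p) (hq : 0 < q) :
    p * logb 2 (p / q) = (p * log p - p * log q) / log 2 := by
  rcases hp.eq_or_lt with rfl | hp
  · simp
  rw [logb, log_div hp.ne' hq.ne']
  ring

lemma klDiv2_nonneg {p q : β → ℝ} (hp : IsPMF p) (hq : ∀ b, 0 ≤ q b)
    (hpq : ∀ b, 0 < p b → 0 < q b) (hq1 : ∑ b, q b ≤ 1) : 0 ≤ klDiv2 p q := by
  have h : ∑ b, (p b - q b) ≤ ∑ b, p b * log (p b / q b) :=
    sum_le_sum fun b _ => sub_le_mul_log_div (hp.1 b) (hq b) (hpq b)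
  rw [sum_sub_distrib, hp.2] at h
  have h2 : klDiv2 p q = (∑ b, p b * log (p b / q b)) / log 2 := by
    simp only [klDiv2, logb, mul_div_assoc', sum_div]
  rw [h2]
  exact div_nonneg (by linarith) (log_nonneg one_le_two)

lemma klDiv2_eq_sub {p q : β → ℝ} (hq : ∀ b, 0 < q b) :
    klDiv2 p q = ∑ b, p b * logb 2 (p b) - ∑ b, p b * logb 2 (q b) := by
  rw [klDiv2, ← sum_sub_distrib]
  refine sum_congr rfl fun b _ => ?_
  rcases eq_or_ne (p b) 0 with h | h
  · simp [h]
  rw [logb_div h (hq b).ne', mul_sub]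

lemma sum_mul_logb_le_sum_mul_logb {p q : β → ℝ} (hp : IsPMF p) (hq : ∀ b, 0 < q b)
    (hq1 : ∑ b, q b ≤ 1) : ∑ b, p b * logb 2 (q b) ≤ ∑ b, p b * logb 2 (p b) := by
  have := klDiv2_nonneg hp (fun b => (hq b).le) (fun b _ => hq b) hq1
  rw [klDiv2_eq_sub hq] at this
  linarith

lemma klDiv2_convex_comb {p₀ p₁ q : β → ℝ} (hp₀ : ∀ b, 0 ≤ p₀ b) (hp₁ : ∀ b, 0 ≤ p₁ b)
    (hq : ∀ b, 0 < q b) {t : ℝ} (ht₀ : 0 ≤ t) (ht₁ : t ≤ 1) :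
    klDiv2 (fun b => (1 - t) * p₀ b + t * p₁ b) q ≤ (1 - t) * klDiv2 p₀ q + t * klDiv2 p₁ q := by
  simp only [klDiv2, mul_sum]
  rw [← sum_add_distrib]
  refine sum_le_sum fun b _ => ?_
  have hmix : 0 ≤ (1 - t) * p₀ b + t * p₁ b := by
    have := hp₀ b; have := hp₁ b; positivity
  have hconv := convexOn_mul_log.2 (Set.mem_Ici.2 (hp₀ b)) (Set.mem_Ici.2 (hp₁ b))
    (sub_nonneg.2 ht₁) ht₀ (by ring)
  simp only [smul_eq_mul] at hconv
  rw [mul_logb_div_eq hmix (hq b), mul_logb_div_eq (hp₀ b) (hq b),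
    mul_logb_div_eq (hp₁ b) (hq b), mul_div_assoc', mul_div_assoc', ← add_div]
  gcongr
  linear_combination hconv

lemma klDiv2_indicator {q : β → ℝ} (b₀ : β) :
    klDiv2 (fun b => if b = b₀ then 1 else 0) q = - logb 2 (q b₀) := by
  simp [klDiv2, logb_inv]

lemma klDiv2_le_klDiv2_add {p q q' : β → ℝ} (hp : IsPMF p) (hpq : ∀ b, 0 < p b → 0 < q b)
    (hq' : ∀ b, 0 < q' b) {c : ℝ} (hqq' : ∀ b, q b ≤ 2 ^ c * q' b) :
    klDiv2 p q' ≤ klDiv2 p q + c := by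
  have key : ∀ b, p b * logb 2 (p b / q' b) ≤ p b * logb 2 (p b / q b) + p b * c := by
    intro b
    rcases (hp.1 b).eq_or_lt with h | h
    · simp [← h]
    have hq := hpq b h
    have hlog : logb 2 (q b) ≤ c + logb 2 (q' b) := by
      calc logb 2 (q b) ≤ logb 2 (2 ^ c * q' b) :=
            logb_le_logb_of_le one_lt_two hq (hqq' b)
        _ = c + logb 2 (q' b) := by
            rw [logb_mul (by positivity) (hq' b).ne', logb_rpow two_pos (by norm_num)]
    rw [logb_div h.ne' (hq' b).ne', logb_div h.ne' hq.ne']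
    nlinarith
  calc klDiv2 p q' ≤ ∑ b, (p b * logb 2 (p b / q b) + p b * c) := sum_le_sum fun b _ => key b
    _ = klDiv2 p q + c := by rw [sum_add_distrib, ← sum_mul, hp.2, one_mul, klDiv2]

lemma mul_logb_sq_le {t : ℝ} (h₀ : 0 ≤ t) (h₁ : t ≤ 1) :
    t * logb 2 t ^ 2 ≤ 4 / log 2 ^ 2 := by
  rcases h₀.eq_or_lt with rfl | h₀
  · rw [zero_mul]; positivity
  -- `t (log t)² = 4 (√t log √t)²` and `|s log s| < 1` on `(0, 1]`
  have hs := abs_log_mul_self_lt (√t) (sqrt_pos.2 h₀) (sqrt_le_one.2 h₁)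
  have hsq : (log √t * √t) ^ 2 ≤ 1 := by
    rw [← sq_abs]; nlinarith [abs_nonneg (log √t * √t)]
  have heq : t * log t ^ 2 = 4 * (log √t * √t) ^ 2 := by
    rw [log_sqrt h₀.le]
    nlinarith [sq_sqrt h₀.le]
  rw [logb, div_pow, mul_div_assoc']
  gcongr
  linarith

lemma sum_mul_logb_div_sq_le {p q : β → ℝ} (hp : IsPMF p) {r : ℝ} (hr : 0 < r)
    (hrq : ∀ b, r ≤ q b) (hq1 : ∀ b, q b ≤ 1) :
    ∑ b, p b * logb 2 (p b / q b) ^ 2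
      ≤ 8 * Fintype.card β / log 2 ^ 2 + 2 * logb 2 r ^ 2 := by
  have hp1 : ∀ b, p b ≤ 1 := fun b => hp.2 ▸ single_le_sum (fun b _ => hp.1 b) (mem_univ b)
  have key : ∀ b, p b * logb 2 (p b / q b) ^ 2
      ≤ 2 * (4 / log 2 ^ 2) + 2 * p b * logb 2 r ^ 2 := by
    intro b
    rcases (hp.1 b).eq_or_lt with h | h
    · simp only [← h, zero_mul, mul_zero, add_zero]; positivity
    have hq := hr.trans_le (hrq b)
    have hqr : logb 2 (q b) ^ 2 ≤ logb 2 r ^ 2 := by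
      have h1 := logb_le_logb_of_le one_lt_two hr (hrq b)
      have h2 := logb_nonpos one_lt_two hq.le (hq1 b)
      nlinarith
    have hpp := mul_logb_sq_le (hp.1 b) (hp1 b)
    rw [logb_div h.ne' hq.ne']
    nlinarith [sq_nonneg (logb 2 (p b) + logb 2 (q b)), mul_le_mul_of_nonneg_left hqr h.le]
  calc ∑ b, p b * logb 2 (p b / q b) ^ 2
      ≤ ∑ b, (2 * (4 / log 2 ^ 2) + 2 * p b * logb 2 r ^ 2) := sum_le_sum fun b _ => key b
    _ = 8 * Fintype.card β / log 2 ^ 2 + 2 * logb 2 r ^ 2 := by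
        rw [sum_add_distrib, sum_const, card_univ, nsmul_eq_mul, ← sum_mul, ← mul_sum, hp.2]
        ring

lemma sum_mul_sub_sq_le {p : β → ℝ} (hp : IsPMF p) (f : β → ℝ) :
    ∑ b, p b * (f b - ∑ b', p b' * f b') ^ 2 ≤ ∑ b, p b * f b ^ 2 := by
  set m := ∑ b', p b' * f b'
  have h : ∀ b, p b * (f b - m) ^ 2 = p b * f b ^ 2 - 2 * m * (p b * f b) + m ^ 2 * p b :=
    fun b => by ring
  rw [sum_congr rfl fun b _ => h b, sum_add_distrib, sum_sub_distrib, ← mul_sum, ← mul_sum, hp.2]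
  nlinarith [sq_nonneg m]

end KullbackLeibler

section ProductWeights

variable {ι β : Type*} [Fintype ι] [DecidableEq ι] [Fintype β] {w : ι → β → ℝ}

lemma sum_prod_mul_prod (w f : ι → β → ℝ) :
    ∑ z : ι → β, (∏ i, w i (z i)) * ∏ i, f i (z i) = ∏ i, ∑ b, w i b * f i b := by
  simp_rw [← prod_mul_distrib]
  rw [prod_univ_sum, Fintype.piFinset_univ]

lemma sum_prod_mul_prod_finset (hw : ∀ i, ∑ b, w i b = 1) (s : Finset ι) (f : ι → β → ℝ) :
    ∑ z : ι → β, (∏ i, w i (z i)) * ∏ i ∈ s, f i (z i) = ∏ i ∈ s, ∑ b, w i b * f i b := by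
  have h := sum_prod_mul_prod w (fun i b => if i ∈ s then f i b else 1)
  simp only [mul_ite, mul_one, sum_ite_irrel, hw] at h
  simpa [prod_ite_mem] using h

lemma sum_prod_eq_one (hw : ∀ i, ∑ b, w i b = 1) : ∑ z : ι → β, ∏ i, w i (z i) = 1 := by
  simpa using sum_prod_mul_prod_finset hw ∅ (fun _ _ => 1)

lemma sum_prod_mul_apply (hw : ∀ i, ∑ b, w i b = 1) (j : ι) (g : β → ℝ) :
    ∑ z : ι → β, (∏ i, w i (z i)) * g (z j) = ∑ b, w j b * g b := by
  simpa using sum_prod_mul_prod_finset hw {j} (fun _ => g)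

lemma sum_prod_mul_sum (hw : ∀ i, ∑ b, w i b = 1) (g : ι → β → ℝ) :
    ∑ z : ι → β, (∏ i, w i (z i)) * ∑ i, g i (z i) = ∑ i, ∑ b, w i b * g i b := by
  simp_rw [mul_sum]
  rw [sum_comm]
  exact sum_congr rfl fun i _ => sum_prod_mul_apply hw i (g i)

lemma sum_prod_mul_sum_sq (hw : ∀ i, ∑ b, w i b = 1) {g : ι → β → ℝ}
    (hg : ∀ i, ∑ b, w i b * g i b = 0) :
    ∑ z : ι → β, (∏ i, w i (z i)) * (∑ i, g i (z i)) ^ 2 = ∑ i, ∑ b, w i b * g i b ^ 2 := by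
  simp_rw [sq, sum_mul_sum, mul_sum]
  rw [sum_comm]
  refine sum_congr rfl fun i _ => ?_
  rw [sum_comm, sum_eq_single i]
  · simpa using sum_prod_mul_apply hw i (fun b => g i b * g i b)
  · -- distinct coordinates are independent, so the cross term factors into two zero means
    intro j _ hji
    have h := sum_prod_mul_prod_finset hw {i, j} g
    simp_rw [prod_pair hji.symm, hg i, zero_mul] at h
    exact h
  · simp

end ProductWeights

section Markov

variable {α : Type*} [Fintype α] {μ : α → ℝ}

lemma sum_filter_lt_le_of_sum_mul_le (hμ : ∀ a, 0 ≤ μ a) {Y : α → ℝ} (hY : ∀ a, 0 ≤ Y a)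
    {t c : ℝ} (ht : 0 ≤ t) (hc : 0 ≤ c) (hE : ∑ a, μ a * Y a ≤ c * t) :
    ∑ a ∈ univ.filter (fun a => t < Y a), μ a ≤ c := by
  by_contra! h
  obtain ⟨a, ha, hμa⟩ : ∃ a ∈ univ.filter (fun a => t < Y a), 0 < μ a := by
    by_contra! h'
    linarith [sum_nonpos h']
  have hlt : ∑ a ∈ univ.filter (fun a => t < Y a), μ a * t
      < ∑ a ∈ univ.filter (fun a => t < Y a), μ a * Y a :=
    sum_lt_sum (fun b hb => mul_le_mul_of_nonneg_left (mem_filter.1 hb).2.le (hμ b))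
      ⟨a, ha, mul_lt_mul_of_pos_left (mem_filter.1 ha).2 hμa⟩
  have hsub : ∑ a ∈ univ.filter (fun a => t < Y a), μ a * Y a ≤ ∑ a, μ a * Y a :=
    sum_le_sum_of_subset_of_nonneg (filter_subset _ _) fun b _ _ => mul_nonneg (hμ b) (hY b)
  rw [← sum_mul] at hlt
  nlinarith

lemma sum_filter_add_lt_le (hμ : ∀ a, 0 ≤ μ a) (L : α → ℝ) (m : ℝ) {t : ℝ} (ht : 0 < t) :
    ∑ a ∈ univ.filter (fun a => m + t < L a), μ a ≤ (∑ a, μ a * (L a - m) ^ 2) / t ^ 2 := by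
  have hsub : univ.filter (fun a => m + t < L a) ⊆ univ.filter (fun a => t ^ 2 < (L a - m) ^ 2) :=
    fun a => by simp only [mem_filter, mem_univ, true_and]; intro h; nlinarith
  refine (sum_le_sum_of_subset_of_nonneg hsub fun a _ _ => hμ a).trans ?_
  refine sum_filter_lt_le_of_sum_mul_le hμ (fun a => sq_nonneg _) (sq_nonneg t)
    (div_nonneg (sum_nonneg fun a _ => mul_nonneg (hμ a) (sq_nonneg _)) (sq_nonneg t)) ?_
  rw [div_mul_cancel₀ _ (pow_pos ht 2).ne']

end Markov

lemma eventually_mul_logb_add_lt (K C : ℝ) {δ : ℝ} (hδ : 0 < δ) :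
    ∀ᶠ n : ℕ in atTop, K * logb 2 (n + 1) + C < n * δ := by
  have hlog : Tendsto (fun n : ℕ => log ((n : ℝ) + 1) / n) atTop (𝓝 0) := by
    have h := (tendsto_pow_log_div_mul_add_atTop 1 (-1) 1 one_ne_zero).comp
      (tendsto_atTop_add_const_right atTop 1 tendsto_natCast_atTop_atTop)
    refine h.congr fun n => ?_
    simp
  have h : Tendsto (fun n : ℕ => K / log 2 * (log ((n : ℝ) + 1) / n) + C / n) atTop (𝓝 0) := by
    simpa using (hlog.const_mul (K / log 2)).add (tendsto_const_div_atTop_nhds_zero_nat C)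
  filter_upwards [h.eventually (gt_mem_nhds hδ), eventually_ne_atTop 0] with n hn hn0
  have hnpos : (0 : ℝ) < n := by positivity
  rw [logb]
  calc K * (log (n + 1) / log 2) + C
      = (K / log 2 * (log ((n : ℝ) + 1) / n) + C / n) * n := by field_simp
    _ < δ * n := by gcongr
    _ = n * δ := mul_comm _ _

lemma abs_div_logb_add_lt {P R ε κ A₁ A₂ n : ℝ} (hn : 0 < n) (hκ : 0 < κ) (hA₁ : 0 < A₁)
    (hA₂ : 0 < A₂) (hup : P ≤ A₁ * 2 ^ (-n * R)) (hlow : κ ≤ 2 ^ (n * (R + ε / 2)) * A₂ * P)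
    (h₁ : logb 2 A₁ < n * ε) (h₂ : logb 2 A₂ - logb 2 κ < n * (ε / 2)) :
    |1 / n * logb 2 P + R| < ε := by
  have hP : 0 < P := pos_of_mul_pos_right (hκ.trans_le hlow) (by positivity)
  have hu := logb_le_logb_of_le one_lt_two hP hup
  rw [logb_mul hA₁.ne' (by positivity), logb_rpow two_pos (by norm_num)] at hu
  have hl := logb_le_logb_of_le one_lt_two hκ hlow
  rw [logb_mul (by positivity) hP.ne', logb_mul (by positivity) hA₂.ne',
    logb_rpow two_pos (by norm_num)] at hl
  have heq : 1 / n * logb 2 P + R = (logb 2 P + n * R) / n := by field_simp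
  rw [heq, abs_lt, lt_div_iff₀ hn, div_lt_iff₀ hn]
  constructor <;> nlinarith

section Empirical

variable {α : Type*} [Fintype α] {n : ℕ}

lemma sum_comp_eq_mul_sum_empDist (y : Fin n → α) (g : α → ℝ) :
    ∑ i, g (y i) = n * ∑ a, empDist y a * g a := by
  rcases eq_or_ne n 0 with rfl | hn
  · simp
  rw [← sum_fiberwise_of_maps_to (g := y) fun i _ => mem_univ (y i), mul_sum]
  refine sum_congr rfl fun a _ => ?_
  rw [sum_congr rfl fun i hi => by rw [(mem_filter.1 hi).2], sum_const, nsmul_eq_mul, empDist]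
  field_simp

lemma empDist_nonneg (y : Fin n → α) (a : α) : 0 ≤ empDist y a := by
  unfold empDist; positivity

lemma isPMF_empDist (hn : n ≠ 0) (y : Fin n → α) : IsPMF (empDist y) := by
  refine ⟨empDist_nonneg y, ?_⟩
  have h := sum_comp_eq_mul_sum_empDist y (fun _ => 1)
  simp only [sum_const, card_univ, Fintype.card_fin, nsmul_eq_mul, mul_one] at h
  exact (mul_eq_left₀ (Nat.cast_ne_zero.2 hn)).1 h.symm

lemma empDist_apply_pos (y : Fin n → α) (i : Fin n) : 0 < empDist y (y i) := by
  have hcard : 0 < (univ.filter fun j => y j = y i).card := card_pos.2 ⟨i, by simp⟩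
  have hn : 0 < n := i.pos
  unfold empDist; positivity

lemma prod_comp_eq_rpow (y : Fin n → α) {f : α → ℝ} (hf : ∀ i, 0 < f (y i)) :
    ∏ i, f (y i) = 2 ^ (n * ∑ a, empDist y a * logb 2 (f a)) := by
  rw [← sum_comp_eq_mul_sum_empDist, rpow_sum_of_pos two_pos]
  exact prod_congr rfl fun i _ => (rpow_logb two_pos (by norm_num) (hf i)).symm

lemma rpow_neg_mul_empEnt (y : Fin n → α) :
    (2 : ℝ) ^ (-(n : ℝ) * empEnt y) = ∏ i, empDist y (y i) := by
  rw [prod_comp_eq_rpow y (empDist_apply_pos y), empEnt, neg_mul_neg]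

lemma prod_le_prod_empDist (hn : n ≠ 0) (y : Fin n → α) {q : α → ℝ} (hq : ∀ a, 0 < q a)
    (hq1 : ∑ a, q a ≤ 1) : ∏ i, q (y i) ≤ ∏ i, empDist y (y i) := by
  rw [prod_comp_eq_rpow y fun i => hq _, prod_comp_eq_rpow y (empDist_apply_pos y)]
  exact rpow_le_rpow_of_exponent_le one_le_two <| mul_le_mul_of_nonneg_left
    (sum_mul_logb_le_sum_mul_logb (isPMF_empDist hn y) hq hq1) n.cast_nonneg

lemma card_image_empDist_le :
    (univ.image (empDist : (Fin n → α) → α → ℝ)).card ≤ (n + 1) ^ Fintype.card α := by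
  let cnt : (Fin n → α) → α → Fin (n + 1) := fun y a =>
    ⟨(univ.filter fun i => y i = a).card,
      Nat.lt_succ_of_le ((card_filter_le _ _).trans_eq (by simp))⟩
  have h : univ.image (empDist : (Fin n → α) → α → ℝ)
      = (univ.image cnt).image fun c a => ((c a : ℕ) : ℝ) / n := by
    rw [image_image]; rfl
  calc (univ.image (empDist : (Fin n → α) → α → ℝ)).card ≤ (univ.image cnt).card :=
        h ▸ card_image_le
    _ ≤ Fintype.card (α → Fin (n + 1)) := card_le_univ _
    _ = (n + 1) ^ Fintype.card α := by simp

lemma sum_prod_le_card_image {ι β γ : Type*} [Fintype ι] [DecidableEq ι] [Fintype β]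
    [DecidableEq γ] (c : (ι → β) → γ)
    (w : γ → ι → β → ℝ) (hw : ∀ z i b, 0 ≤ w (c z) i b) (hw1 : ∀ z i, ∑ b, w (c z) i b = 1) :
    ∑ z : ι → β, ∏ i, w (c z) i (z i) ≤ (univ.image c).card := by
  rw [← sum_fiberwise_of_maps_to fun z _ => mem_image_of_mem c (mem_univ z), card_eq_sum_ones,
    Nat.cast_sum, Nat.cast_one]
  refine sum_le_sum fun v hv => ?_
  obtain ⟨z₀, -, rfl⟩ := mem_image.1 hv
  calc ∑ z ∈ univ.filter (fun z => c z = c z₀), ∏ i, w (c z) i (z i)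
      = ∑ z ∈ univ.filter (fun z => c z = c z₀), ∏ i, w (c z₀) i (z i) :=
        sum_congr rfl fun z hz => by rw [(mem_filter.1 hz).2]
    _ ≤ ∑ z : ι → β, ∏ i, w (c z₀) i (z i) :=
        sum_le_sum_of_subset_of_nonneg (filter_subset _ _) fun z _ _ =>
          prod_nonneg fun i _ => hw z₀ i (z i)
    _ = 1 := sum_prod_eq_one (hw1 z₀)

lemma sum_rpow_neg_mul_empEnt_le (hn : n ≠ 0) :
    ∑ z : Fin n → α, (2 : ℝ) ^ (-(n : ℝ) * empEnt z) ≤ (n + 1) ^ Fintype.card α := by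
  simp_rw [rpow_neg_mul_empEnt]
  calc ∑ z : Fin n → α, ∏ i, empDist z (z i)
      ≤ (univ.image (empDist : (Fin n → α) → α → ℝ)).card :=
        sum_prod_le_card_image empDist (fun P _ => P) (fun z _ => empDist_nonneg z)
          fun z _ => (isPMF_empDist hn z).2
    _ ≤ (n + 1) ^ Fintype.card α := by exact_mod_cast card_image_empDist_le

lemma one_le_sum_rpow_neg_mul_empEnt [Nonempty α] (hn : n ≠ 0) :
    1 ≤ ∑ z : Fin n → α, (2 : ℝ) ^ (-(n : ℝ) * empEnt z) := by
  set u : α → ℝ := fun _ => 1 / Fintype.card α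
  have hu : ∑ a, u a = 1 := by
    simp only [u, sum_const, card_univ, nsmul_eq_mul]
    exact mul_one_div_cancel (Nat.cast_ne_zero.2 Fintype.card_ne_zero)
  calc (1 : ℝ) = ∑ z : Fin n → α, ∏ i, u (z i) := (sum_prod_eq_one fun _ => hu).symm
    _ ≤ ∑ z : Fin n → α, (2 : ℝ) ^ (-(n : ℝ) * empEnt z) := by
        simp_rw [rpow_neg_mul_empEnt]
        exact sum_le_sum fun z _ => prod_le_prod_empDist hn z (fun _ => by positivity) hu.le

end Empirical

section RateDistortion

variable {X Xh : Type*} [Fintype X] [Fintype Xh] {d : X → Xh → ℝ} {D : ℝ} {Q : X → ℝ}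

noncomputable def outDist (Q : X → ℝ) (W : X → Xh → ℝ) (b : Xh) : ℝ := ∑ a, Q a * W a b

lemma isPMF_outDist (hQ : IsPMF Q) {W : X → Xh → ℝ} (hW : IsCondPMF W) : IsPMF (outDist Q W) := by
  refine ⟨fun b => sum_nonneg fun a _ => mul_nonneg (hQ.1 a) ((hW a).1 b), ?_⟩
  simp only [outDist]
  rw [sum_comm]
  simp [← mul_sum, (hW _).2, hQ.2]

lemma mul_le_outDist (hQ : IsPMF Q) {W : X → Xh → ℝ} (hW : IsCondPMF W) (a : X) (b : Xh) :
    Q a * W a b ≤ outDist Q W b :=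
  single_le_sum (f := fun a => Q a * W a b) (fun a _ => mul_nonneg (hQ.1 a) ((hW a).1 b))
    (mem_univ a)

lemma mutInf2_eq_sum_mul_klDiv2 (Q : X → ℝ) (W : X → Xh → ℝ) :
    mutInf2 Q W = ∑ a, Q a * klDiv2 (W a) (outDist Q W) := by
  simp only [mutInf2, klDiv2, outDist, mul_sum, mul_assoc]

lemma mutInf2_nonneg (hQ : IsPMF Q) {W : X → Xh → ℝ} (hW : IsCondPMF W) : 0 ≤ mutInf2 Q W := by
  rw [mutInf2_eq_sum_mul_klDiv2]
  refine sum_nonneg fun a _ => ?_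
  rcases (hQ.1 a).eq_or_lt with h | h
  · simp [← h]
  have hM := isPMF_outDist hQ hW
  exact mul_nonneg h.le <| klDiv2_nonneg (hW a) hM.1
    (fun b hb => (mul_pos h hb).trans_le (mul_le_outDist hQ hW a b)) hM.2.le

lemma sum_mul_klDiv2_le_mutInf2_add (hQ : IsPMF Q) {W : X → Xh → ℝ} (hW : IsCondPMF W)
    {q : Xh → ℝ} (hq : ∀ b, 0 < q b) {c : ℝ} (hMq : ∀ b, outDist Q W b ≤ 2 ^ c * q b) :
    ∑ a, Q a * klDiv2 (W a) q ≤ mutInf2 Q W + c := by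
  calc ∑ a, Q a * klDiv2 (W a) q ≤ ∑ a, Q a * (klDiv2 (W a) (outDist Q W) + c) := by
        refine sum_le_sum fun a _ => ?_
        rcases (hQ.1 a).eq_or_lt with h | h
        · simp [← h]
        refine mul_le_mul_of_nonneg_left (klDiv2_le_klDiv2_add (hW a) (fun b hb => ?_) hq hMq) h.le
        exact (mul_pos h hb).trans_le (mul_le_outDist hQ hW a b)
    _ = mutInf2 Q W + c := by
        rw [mutInf2_eq_sum_mul_klDiv2]
        simp only [mul_add, sum_add_distrib, ← sum_mul, hQ.2, one_mul]

lemma RD_le_mutInf2 (hQ : IsPMF Q) {V : X → Xh → ℝ} (hV : IsCondPMF V)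
    (hVD : ∑ a, ∑ b, Q a * V a b * d a b ≤ D) : RD d D Q ≤ mutInf2 Q V :=
  csInf_le ⟨0, by rintro r ⟨W, hW, -, rfl⟩; exact mutInf2_nonneg hQ hW⟩ ⟨V, hV, hVD, rfl⟩

lemma exists_mutInf2_lt_RD_add (hcover : ∀ a, ∃ b, d a b ≤ D) (hQ : IsPMF Q) {ε : ℝ}
    (hε : 0 < ε) : ∃ V : X → Xh → ℝ, IsCondPMF V ∧ ∑ a, ∑ b, Q a * V a b * d a b ≤ D ∧
      mutInf2 Q V < RD d D Q + ε := by
  choose f hf using hcover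
  let V : X → Xh → ℝ := fun a b => if b = f a then 1 else 0
  have hV : IsCondPMF V := fun a => ⟨fun b => by positivity, by simp [V]⟩
  have hVD : ∑ a, ∑ b, Q a * V a b * d a b ≤ D := by
    simp only [V, mul_ite, mul_one, mul_zero, ite_mul, zero_mul, sum_ite_eq', mem_univ, if_true]
    calc ∑ a, Q a * d a (f a) ≤ ∑ a, Q a * D := sum_le_sum fun a _ =>
          mul_le_mul_of_nonneg_left (hf a) (hQ.1 a)
      _ = D := by rw [← sum_mul, hQ.2, one_mul]
  have hne : {r | ∃ V : X → Xh → ℝ, IsCondPMF V ∧ ∑ a, ∑ b, Q a * V a b * d a b ≤ D ∧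
      r = mutInf2 Q V}.Nonempty := ⟨_, V, hV, hVD, rfl⟩
  obtain ⟨r, ⟨W, hW, hWD, rfl⟩, hr⟩ := Real.lt_sInf_add_pos hne hε
  exact ⟨W, hW, hWD, hr⟩

end RateDistortion

section CondDist

variable {X Xh : Type*} [Fintype Xh] [Nonempty Xh]

/-- Rows of `P` of mass zero carry no weight; they get an arbitrary point mass so that the
result is always a channel. -/
noncomputable def condDist (P : X × Xh → ℝ) (a : X) : Xh → ℝ :=
  if ∑ b, P (a, b) = 0 then fun b => if b = Classical.arbitrary Xh then 1 else 0
  else fun b => P (a, b) / ∑ b', P (a, b')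

lemma isCondPMF_condDist [Fintype X] {P : X × Xh → ℝ} (hP : ∀ p, 0 ≤ P p) :
    IsCondPMF (condDist P) := by
  intro a
  unfold condDist
  split_ifs with h
  · exact ⟨fun b => by positivity, by simp⟩
  · exact ⟨fun b => div_nonneg (hP _) (sum_nonneg fun b _ => hP _), by rw [← sum_div, div_self h]⟩

lemma sum_mul_condDist {P : X × Xh → ℝ} (hP : ∀ p, 0 ≤ P p) (a : X) (b : Xh) :
    (∑ b', P (a, b')) * condDist P a b = P (a, b) := by
  unfold condDist
  split_ifs with h
  · rw [h, zero_mul, (sum_eq_zero_iff_of_nonneg fun b _ => hP (a, b)).1 h b (mem_univ b)]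
  · exact mul_div_cancel₀ _ h

end CondDist

section JointType

variable {X Xh : Type*} [Fintype X] [Fintype Xh] {n : ℕ}

lemma sum_empDist_pair_left (x : Fin n → X) (z : Fin n → Xh) (a : X) :
    ∑ b, empDist (fun i => (x i, z i)) (a, b) = empDist x a := by
  simp only [empDist, ← sum_div, ← Nat.cast_sum]
  rw [card_eq_sum_card_fiberwise (f := z) (t := univ) fun i _ => mem_univ _]
  congr 2
  refine sum_congr rfl fun b _ => ?_
  rw [filter_filter]
  simp [Prod.ext_iff]

lemma sum_empDist_pair_right (x : Fin n → X) (z : Fin n → Xh) (b : Xh) :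
    ∑ a, empDist (fun i => (x i, z i)) (a, b) = empDist z b := by
  simp only [empDist, ← sum_div, ← Nat.cast_sum]
  rw [card_eq_sum_card_fiberwise (f := x) (t := univ) fun i _ => mem_univ _]
  congr 2
  refine sum_congr rfl fun a _ => ?_
  rw [filter_filter]
  simp [Prod.ext_iff, and_comm]

variable [Nonempty Xh]

noncomputable def condType (x : Fin n → X) (z : Fin n → Xh) : X → Xh → ℝ :=
  condDist (empDist fun i => (x i, z i))

lemma isCondPMF_condType (x : Fin n → X) (z : Fin n → Xh) : IsCondPMF (condType x z) :=
  isCondPMF_condDist (empDist_nonneg _)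

lemma empDist_mul_condType (x : Fin n → X) (z : Fin n → Xh) (a : X) (b : Xh) :
    empDist x a * condType x z a b = empDist (fun i => (x i, z i)) (a, b) := by
  rw [condType, ← sum_empDist_pair_left x z a]
  exact sum_mul_condDist (empDist_nonneg _) a b

lemma mutInf2_condType_eq (x : Fin n → X) (z : Fin n → Xh) :
    mutInf2 (empDist x) (condType x z)
      = ∑ p, empDist (fun i => (x i, z i)) p * logb 2 (condType x z p.1 p.2 / empDist z p.2) := by
  simp only [mutInf2, empDist_mul_condType, sum_empDist_pair_right, Fintype.sum_prod_type]

lemma prod_condType_eq (x : Fin n → X) (z : Fin n → Xh) :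
    ∏ i, condType x z (x i) (z i)
      = 2 ^ (n * mutInf2 (empDist x) (condType x z)) * 2 ^ (-(n : ℝ) * empEnt z) := by
  have hz := empDist_apply_pos z
  have hV : ∀ i, 0 < condType x z (x i) (z i) := fun i => by
    have h := empDist_apply_pos (fun i => (x i, z i)) i
    rw [← empDist_mul_condType] at h
    exact pos_of_mul_pos_right h (empDist_nonneg x _)
  -- `∏ᵢ V(zᵢ | xᵢ) / P̂_z(zᵢ)` is a product over the joint type, with exponent `n I`
  rw [rpow_neg_mul_empEnt, mutInf2_condType_eq, ← prod_comp_eq_rpow (fun i => (x i, z i))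
    (f := fun p => condType x z p.1 p.2 / empDist z p.2) fun i => div_pos (hV i) (hz i),
    ← prod_mul_distrib]
  exact prod_congr rfl fun i _ => (div_mul_cancel₀ _ (hz i).ne').symm

lemma mul_sum_condType_distortion (d : X → Xh → ℝ) (x : Fin n → X) (z : Fin n → Xh) :
    n * ∑ a, ∑ b, empDist x a * condType x z a b * d a b = dSeq d x z := by
  simp only [empDist_mul_condType, ← Fintype.sum_prod_type (f := fun p : X × Xh =>
    empDist (fun i => (x i, z i)) p * d p.1 p.2)]
  exact (sum_comp_eq_mul_sum_empDist (fun i => (x i, z i)) fun p => d p.1 p.2).symm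

lemma rpow_neg_mul_empEnt_le (hn : n ≠ 0) {d : X → Xh → ℝ} {D : ℝ} {x : Fin n → X}
    {z : Fin n → Xh} (hz : dSeq d x z ≤ n * D) :
    (2 : ℝ) ^ (-(n : ℝ) * empEnt z)
      ≤ 2 ^ (-(n : ℝ) * RD d D (empDist x)) * ∏ i, condType x z (x i) (z i) := by
  have hVD : ∑ a, ∑ b, empDist x a * condType x z a b * d a b ≤ D :=
    le_of_mul_le_mul_left (mul_sum_condType_distortion d x z ▸ hz) (by positivity)
  have hR := RD_le_mutInf2 (isPMF_empDist hn x) (isCondPMF_condType x z) hVD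
  rw [prod_condType_eq, ← mul_assoc, ← rpow_add two_pos]
  refine le_mul_of_one_le_left (by positivity) (one_le_rpow one_le_two ?_)
  nlinarith

lemma sum_prod_condType_le (x : Fin n → X) :
    ∑ z : Fin n → Xh, ∏ i, condType x z (x i) (z i) ≤ (n + 1) ^ Fintype.card (X × Xh) := by
  calc ∑ z : Fin n → Xh, ∏ i, condType x z (x i) (z i)
      ≤ (univ.image fun z : Fin n → Xh => empDist fun i => (x i, z i)).card :=
        sum_prod_le_card_image _ (fun P i => condDist P (x i))
          (fun z i => (isCondPMF_condType x z (x i)).1) fun z i => (isCondPMF_condType x z (x i)).2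
    _ ≤ (univ.image (empDist : (Fin n → X × Xh) → X × Xh → ℝ)).card :=
        Nat.cast_le.2 (card_le_card (image_subset_iff.2 fun z _ => mem_image_of_mem _ (mem_univ _)))
    _ ≤ (n + 1) ^ Fintype.card (X × Xh) := by exact_mod_cast card_image_empDist_le

lemma sum_ball_rpow_le (hn : n ≠ 0) (d : X → Xh → ℝ) (D : ℝ) (x : Fin n → X) :
    ∑ z ∈ univ.filter (fun z : Fin n → Xh => dSeq d x z ≤ n * D), (2 : ℝ) ^ (-(n : ℝ) * empEnt z)
      ≤ (n + 1) ^ Fintype.card (X × Xh) * 2 ^ (-(n : ℝ) * RD d D (empDist x)) := by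
  have hV : ∀ z : Fin n → Xh, 0 ≤ ∏ i, condType x z (x i) (z i) := fun z =>
    prod_nonneg fun i _ => (isCondPMF_condType x z (x i)).1 (z i)
  calc _ ≤ ∑ z ∈ univ.filter (fun z : Fin n → Xh => dSeq d x z ≤ n * D),
          2 ^ (-(n : ℝ) * RD d D (empDist x)) * ∏ i, condType x z (x i) (z i) :=
        sum_le_sum fun z hz => rpow_neg_mul_empEnt_le hn (mem_filter.1 hz).2
    _ ≤ 2 ^ (-(n : ℝ) * RD d D (empDist x)) * ∑ z : Fin n → Xh, ∏ i, condType x z (x i) (z i) := by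
        rw [← mul_sum]
        exact mul_le_mul_of_nonneg_left (sum_le_sum_of_subset_of_nonneg (filter_subset _ _)
          fun z _ _ => hV z) (by positivity)
    _ ≤ _ := by
        rw [mul_comm]
        exact mul_le_mul_of_nonneg_right (sum_prod_condType_le x) (by positivity)

end JointType

section ChangeOfMeasure

variable {X Xh : Type*} {n : ℕ}

noncomputable def llr (W : X → Xh → ℝ) (q : Xh → ℝ) (x : Fin n → X) (z : Fin n → Xh) : ℝ :=
  ∑ i, logb 2 (W (x i) (z i) / q (z i))

lemma prod_le_rpow_llr_mul_prod {W : X → Xh → ℝ} (hW : ∀ a b, 0 ≤ W a b) {q : Xh → ℝ}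
    (hq : ∀ b, 0 < q b) (x : Fin n → X) (z : Fin n → Xh) :
    ∏ i, W (x i) (z i) ≤ 2 ^ llr W q x z * ∏ i, q (z i) := by
  rw [llr, rpow_sum_of_pos two_pos, ← prod_mul_distrib]
  refine prod_le_prod (fun i _ => hW _ _) fun i _ => ?_
  rcases (hW (x i) (z i)).eq_or_lt with h | h
  · rw [← h]; exact mul_nonneg (by positivity) (hq _).le
  · rw [rpow_logb two_pos (by norm_num) (div_pos h (hq _)), div_mul_cancel₀ _ (hq _).ne']

variable [Fintype Xh]

/-- Change of measure: on the event `llr ≤ s` the channel law is at most `2 ^ s` times the i.i.d.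
law `q`, which in turn is dominated by the universal weight. -/
lemma sum_prod_sub_le_rpow_mul_sum (hn : n ≠ 0) {W : X → Xh → ℝ} (hW : ∀ a b, 0 ≤ W a b)
    {q : Xh → ℝ} (hq : ∀ b, 0 < q b) (hq1 : ∑ b, q b ≤ 1) (x : Fin n → X)
    (A : Finset (Fin n → Xh)) (s : ℝ) :
    ∑ z ∈ A, ∏ i, W (x i) (z i)
        - ∑ z ∈ univ.filter (fun z => s < llr W q x z), ∏ i, W (x i) (z i)
      ≤ 2 ^ s * ∑ z ∈ A, (2 : ℝ) ^ (-(n : ℝ) * empEnt z) := by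
  have hμ : ∀ z : Fin n → Xh, 0 ≤ ∏ i, W (x i) (z i) := fun z => prod_nonneg fun i _ => hW _ _
  have hsplit := sum_filter_add_sum_filter_not A (fun z => llr W q x z ≤ s)
    fun z => ∏ i, W (x i) (z i)
  have htail : ∑ z ∈ A.filter (fun z => ¬ llr W q x z ≤ s), ∏ i, W (x i) (z i)
      ≤ ∑ z ∈ univ.filter (fun z => s < llr W q x z), ∏ i, W (x i) (z i) :=
    sum_le_sum_of_subset_of_nonneg
      (fun z hz => by simp only [mem_filter, not_le, mem_univ, true_and] at hz ⊢; exact hz.2)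
      fun z _ _ => hμ z
  have hgood : ∑ z ∈ A.filter (fun z => llr W q x z ≤ s), ∏ i, W (x i) (z i)
      ≤ 2 ^ s * ∑ z ∈ A, (2 : ℝ) ^ (-(n : ℝ) * empEnt z) := by
    rw [mul_sum]
    calc _ ≤ ∑ z ∈ A.filter (fun z => llr W q x z ≤ s), 2 ^ s * ∏ i, q (z i) :=
          sum_le_sum fun z hz => (prod_le_rpow_llr_mul_prod hW hq x z).trans <|
            mul_le_mul_of_nonneg_right
              (rpow_le_rpow_of_exponent_le one_le_two (mem_filter.1 hz).2)
              (prod_nonneg fun i _ => (hq _).le)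
      _ ≤ ∑ z ∈ A, 2 ^ s * ∏ i, q (z i) :=
          sum_le_sum_of_subset_of_nonneg (filter_subset _ _) fun z _ _ =>
            mul_nonneg (by positivity) (prod_nonneg fun i _ => (hq _).le)
      _ ≤ ∑ z ∈ A, 2 ^ s * (2 : ℝ) ^ (-(n : ℝ) * empEnt z) := by
          gcongr with z
          rw [rpow_neg_mul_empEnt]
          exact prod_le_prod_empDist hn z hq hq1
  linarith

variable [Fintype X]

lemma sum_filter_llr_gt_le {W : X → Xh → ℝ} (hW : IsCondPMF W) {q : Xh → ℝ} {r : ℝ} (hr : 0 < r)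
    (hrq : ∀ b, r ≤ q b) (hq1 : ∀ b, q b ≤ 1) (x : Fin n → X) {t : ℝ} (ht : 0 < t) :
    ∑ z ∈ univ.filter (fun z => ∑ i, klDiv2 (W (x i)) q + t < llr W q x z), ∏ i, W (x i) (z i)
      ≤ n * (8 * Fintype.card Xh / log 2 ^ 2 + 2 * logb 2 r ^ 2) / t ^ 2 := by
  refine (sum_filter_add_lt_le (fun z => prod_nonneg fun i _ => (hW _).1 _) _ _ ht).trans ?_
  gcongr
  set g : Fin n → Xh → ℝ := fun i b => logb 2 (W (x i) b / q b) - klDiv2 (W (x i)) q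
  have hg : ∀ i, ∑ b, W (x i) b * g i b = 0 := fun i => by
    simp only [g, mul_sub, sum_sub_distrib, ← sum_mul, (hW (x i)).2, one_mul, klDiv2, sub_self]
  calc ∑ z : Fin n → Xh, (∏ i, W (x i) (z i)) * (llr W q x z - ∑ i, klDiv2 (W (x i)) q) ^ 2
      = ∑ z : Fin n → Xh, (∏ i, W (x i) (z i)) * (∑ i, g i (z i)) ^ 2 := by
        simp only [llr, g, sum_sub_distrib]
    _ = ∑ i, ∑ b, W (x i) b * g i b ^ 2 := sum_prod_mul_sum_sq (fun i => (hW (x i)).2) hg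
    _ ≤ ∑ _i : Fin n, (8 * Fintype.card Xh / log 2 ^ 2 + 2 * logb 2 r ^ 2) :=
        sum_le_sum fun i _ => (sum_mul_sub_sq_le (hW (x i)) _).trans
          (sum_mul_logb_div_sq_le (hW (x i)) hr hrq hq1)
    _ = _ := by rw [sum_const, card_univ, Fintype.card_fin, nsmul_eq_mul]

end ChangeOfMeasure

section Mixing

variable {X Xh : Type*} {n : ℕ}

noncomputable def mixChannel (t : ℝ) (W : X → Xh → ℝ) (f : X → Xh) (a : X) (b : Xh) : ℝ :=
  (1 - t) * W a b + t * if b = f a then 1 else 0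

variable [Fintype Xh] {d : X → Xh → ℝ} {D : ℝ}

lemma sum_mixChannel_mul_excess (t : ℝ) (W : X → Xh → ℝ) (f : X → Xh) (a : X) :
    ∑ b, mixChannel t W f a b * (d a b - d a (f a))
      = (1 - t) * ∑ b, W a b * (d a b - d a (f a)) := by
  simp [mixChannel, add_mul, sum_add_distrib, mul_sum, mul_assoc]

variable [Fintype X]

lemma isCondPMF_mixChannel {W : X → Xh → ℝ} (hW : IsCondPMF W) (f : X → Xh) {t : ℝ}
    (ht₀ : 0 ≤ t) (ht₁ : t ≤ 1) : IsCondPMF (mixChannel t W f) := by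
  refine fun a => ⟨fun b => ?_, ?_⟩
  · have := (hW a).1 b
    have : 0 ≤ 1 - t := by linarith
    unfold mixChannel; positivity
  · simp [mixChannel, sum_add_distrib, ← mul_sum, (hW a).2]

lemma sum_sum_mul_excess_le {W : X → Xh → ℝ} (hW : IsCondPMF W) (x : Fin n → X)
    (hWD : ∑ a, ∑ b, empDist x a * W a b * d a b ≤ D) (f : X → Xh) :
    ∑ i, ∑ b, W (x i) b * (d (x i) b - d (x i) (f (x i))) ≤ n * D - ∑ i, d (x i) (f (x i)) := by
  have h₁ : ∑ i, ∑ b, W (x i) b * d (x i) b ≤ n * D := by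
    rw [sum_comp_eq_mul_sum_empDist x fun a => ∑ b, W a b * d a b]
    refine mul_le_mul_of_nonneg_left (le_of_eq_of_le ?_ hWD) n.cast_nonneg
    simp only [mul_sum, mul_assoc]
  simp only [mul_sub, sum_sub_distrib, ← sum_mul, (hW _).2, one_mul]
  linarith

lemma klDiv2_mixChannel_le {W : X → Xh → ℝ} (hW : IsCondPMF W) (f : X → Xh) {t : ℝ}
    (ht₀ : 0 ≤ t) (ht₁ : t ≤ 1) {q : Xh → ℝ} {r : ℝ} (hr : 0 < r) (hrq : ∀ b, r ≤ q b)
    (hq1 : ∑ b, q b ≤ 1) (a : X) :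
    klDiv2 (mixChannel t W f a) q ≤ klDiv2 (W a) q - t * logb 2 r := by
  have hq : ∀ b, 0 < q b := fun b => hr.trans_le (hrq b)
  have hconv : klDiv2 (mixChannel t W f a) q
      ≤ (1 - t) * klDiv2 (W a) q + t * klDiv2 (fun b => if b = f a then 1 else 0) q :=
    klDiv2_convex_comb (hW a).1 (fun b => by positivity) hq ht₀ ht₁
  rw [klDiv2_indicator] at hconv
  have h₀ := klDiv2_nonneg (hW a) (fun b => (hq b).le) (fun b _ => hq b) hq1
  have hlog := logb_le_logb_of_le one_lt_two hr (hrq (f a))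
  nlinarith [mul_nonneg ht₀ h₀, mul_le_mul_of_nonneg_left hlog ht₀]

/-- Markov's inequality for the excess distortion over the minimising channel `f`, which the
mixture with weight `t` pushes down to a fraction `1 - t` of its allowance. -/
lemma le_sum_ball_mixChannel {W : X → Xh → ℝ} (hW : IsCondPMF W) (x : Fin n → X)
    (hWD : ∑ a, ∑ b, empDist x a * W a b * d a b ≤ D) {f : X → Xh}
    (hf : ∀ a b, d a (f a) ≤ d a b) {t : ℝ} (ht₀ : 0 ≤ t) (ht₁ : t ≤ 1) :
    t ≤ ∑ z ∈ univ.filter (fun z : Fin n → Xh => dSeq d x z ≤ n * D),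
      ∏ i, mixChannel t W f (x i) (z i) := by
  have hmix := isCondPMF_mixChannel hW f ht₀ ht₁
  set μ : (Fin n → Xh) → ℝ := fun z => ∏ i, mixChannel t W f (x i) (z i)
  set T := n * D - ∑ i, d (x i) (f (x i))
  have he : ∀ a b, 0 ≤ d a b - d a (f a) := fun a b => sub_nonneg.2 (hf a b)
  have hWe := sum_sum_mul_excess_le hW x hWD f
  have hT : 0 ≤ T :=
    (sum_nonneg fun i _ => sum_nonneg fun b _ => mul_nonneg ((hW _).1 _) (he _ _)).trans hWe
  have hEY : ∑ z, μ z * ∑ i, (d (x i) (z i) - d (x i) (f (x i))) ≤ (1 - t) * T :=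
    calc _ = ∑ i, ∑ b, mixChannel t W f (x i) b * (d (x i) b - d (x i) (f (x i))) :=
          sum_prod_mul_sum (fun i => (hmix (x i)).2) fun i b => d (x i) b - d (x i) (f (x i))
      _ = (1 - t) * ∑ i, ∑ b, W (x i) b * (d (x i) b - d (x i) (f (x i))) := by
          simp only [sum_mixChannel_mul_excess, ← mul_sum]
      _ ≤ (1 - t) * T := mul_le_mul_of_nonneg_left hWe (by linarith)
  have hmarkov := sum_filter_lt_le_of_sum_mul_le (μ := μ)
    (fun z => prod_nonneg fun i _ => (hmix _).1 _)
    (fun z => sum_nonneg fun i _ => he _ _) hT (by linarith) hEY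
  have hfilter : univ.filter (fun z => T < ∑ i, (d (x i) (z i) - d (x i) (f (x i))))
      = univ.filter (fun z : Fin n → Xh => ¬ dSeq d x z ≤ n * D) := by
    ext z
    simp only [mem_filter, mem_univ, true_and, not_le, T, dSeq, sum_sub_distrib]
    constructor <;> intro h <;> linarith
  have htot := sum_filter_add_sum_filter_not univ (fun z : Fin n → Xh => dSeq d x z ≤ n * D) μ
  rw [sum_prod_eq_one fun i => (hmix (x i)).2] at htot
  rw [hfilter] at hmarkov
  linarith

end Mixing

section Smoothing

noncomputable def smoothFloor (Xh : Type*) [Fintype Xh] (c : ℝ) : ℝ :=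
  (1 - 2 ^ (-c)) / Fintype.card Xh

variable {Xh : Type*} [Fintype Xh]

/-- Smoothing `M` costs at most `c` bits of likelihood (`M ≤ 2 ^ c q`) and bounds `q` below by
`smoothFloor Xh c`, which keeps the second moment of the log-likelihood ratio bounded. -/
noncomputable def smoothDist (c : ℝ) (M : Xh → ℝ) (b : Xh) : ℝ :=
  2 ^ (-c) * M b + smoothFloor Xh c

lemma smoothFloor_nonneg {c : ℝ} (hc : 0 ≤ c) : 0 ≤ smoothFloor Xh c := by
  have : (2 : ℝ) ^ (-c) ≤ 1 := rpow_le_one_of_one_le_of_nonpos one_le_two (neg_nonpos.2 hc)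
  unfold smoothFloor
  exact div_nonneg (by linarith) (Nat.cast_nonneg _)

lemma smoothFloor_le_smoothDist (c : ℝ) {M : Xh → ℝ} (hM : ∀ b, 0 ≤ M b) (b : Xh) :
    smoothFloor Xh c ≤ smoothDist c M b :=
  le_add_of_nonneg_left (mul_nonneg (by positivity) (hM b))

lemma le_rpow_mul_smoothDist {c : ℝ} (hc : 0 ≤ c) (M : Xh → ℝ) (b : Xh) :
    M b ≤ 2 ^ c * smoothDist c M b := by
  rw [smoothDist, mul_add, ← mul_assoc, ← rpow_add two_pos, add_neg_cancel, rpow_zero, one_mul]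
  exact le_add_of_nonneg_right (mul_nonneg (by positivity) (smoothFloor_nonneg hc))

variable [Nonempty Xh]

lemma smoothFloor_pos {c : ℝ} (hc : 0 < c) : 0 < smoothFloor Xh c := by
  have : (2 : ℝ) ^ (-c) < 1 := rpow_lt_one_of_one_lt_of_neg one_lt_two (neg_lt_zero.2 hc)
  have : (0 : ℝ) < Fintype.card Xh := by exact_mod_cast Fintype.card_pos
  unfold smoothFloor
  exact div_pos (by linarith) this

lemma sum_smoothDist (c : ℝ) {M : Xh → ℝ} (hM : ∑ b, M b = 1) : ∑ b, smoothDist c M b = 1 := by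
  have : (Fintype.card Xh : ℝ) ≠ 0 := Nat.cast_ne_zero.2 Fintype.card_ne_zero
  simp only [smoothDist, smoothFloor, sum_add_distrib, ← mul_sum, hM, sum_const, card_univ,
    nsmul_eq_mul]
  field_simp
  ring

end Smoothing

section LowerBound

variable {X Xh : Type*} [Fintype X] [Fintype Xh] [Nonempty Xh] {n : ℕ}

lemma sum_klDiv2_mixChannel_le (hn : n ≠ 0) (x : Fin n → X) {W : X → Xh → ℝ} (hW : IsCondPMF W)
    (f : X → Xh) {c : ℝ} (hc : 0 < c) {t : ℝ} (ht₀ : 0 ≤ t) (ht₁ : t ≤ 1) :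
    ∑ i, klDiv2 (mixChannel t W f (x i)) (smoothDist c (outDist (empDist x) W))
      ≤ n * (mutInf2 (empDist x) W + c - t * logb 2 (smoothFloor Xh c)) := by
  set Q := empDist x
  set q := smoothDist c (outDist Q W)
  set r := smoothFloor Xh c
  have hQ : IsPMF Q := isPMF_empDist hn x
  have hM : IsPMF (outDist Q W) := isPMF_outDist hQ hW
  have hr : 0 < r := smoothFloor_pos hc
  have hrq : ∀ b, r ≤ q b := smoothFloor_le_smoothDist c hM.1
  have hq : ∀ b, 0 < q b := fun b => hr.trans_le (hrq b)
  have hq1 : ∑ b, q b = 1 := sum_smoothDist c hM.2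
  have hrow := klDiv2_mixChannel_le hW f ht₀ ht₁ hr hrq hq1.le
  have hI := sum_mul_klDiv2_le_mutInf2_add hQ hW hq (le_rpow_mul_smoothDist hc.le _)
  rw [sum_comp_eq_mul_sum_empDist x fun a => klDiv2 (mixChannel t W f a) q]
  refine mul_le_mul_of_nonneg_left ?_ n.cast_nonneg
  calc ∑ a, Q a * klDiv2 (mixChannel t W f a) q
      ≤ ∑ a, Q a * (klDiv2 (W a) q - t * logb 2 r) :=
        sum_le_sum fun a _ => mul_le_mul_of_nonneg_left (hrow a) (hQ.1 a)
    _ = ∑ a, Q a * klDiv2 (W a) q - t * logb 2 r := by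
        simp only [mul_sub, sum_sub_distrib, ← sum_mul, hQ.2, one_mul]
    _ ≤ _ := by linarith

lemma le_rpow_mul_sum_ball (hn : n ≠ 0) (d : X → Xh → ℝ) (D : ℝ) (x : Fin n → X)
    {W : X → Xh → ℝ} (hW : IsCondPMF W) (hWD : ∑ a, ∑ b, empDist x a * W a b * d a b ≤ D)
    {f : X → Xh} (hf : ∀ a b, d a (f a) ≤ d a b) {c : ℝ} (hc : 0 < c) {t : ℝ} (ht₀ : 0 ≤ t)
    (ht₁ : t ≤ 1) {δ : ℝ} (hδ : 0 < δ) :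
    t - (8 * Fintype.card Xh / log 2 ^ 2 + 2 * logb 2 (smoothFloor Xh c) ^ 2) / (n * δ ^ 2)
      ≤ 2 ^ (n * (mutInf2 (empDist x) W + c - t * logb 2 (smoothFloor Xh c) + δ))
        * ∑ z ∈ univ.filter (fun z : Fin n → Xh => dSeq d x z ≤ n * D),
            (2 : ℝ) ^ (-(n : ℝ) * empEnt z) := by
  set q := smoothDist c (outDist (empDist x) W)
  set C := 8 * Fintype.card Xh / log 2 ^ 2 + 2 * logb 2 (smoothFloor Xh c) ^ 2
  have hnpos : (0 : ℝ) < n := by positivity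
  have hmix := isCondPMF_mixChannel hW f ht₀ ht₁
  have hM := isPMF_outDist (isPMF_empDist hn x) hW
  have hrq : ∀ b, smoothFloor Xh c ≤ q b := smoothFloor_le_smoothDist c hM.1
  have hq : ∀ b, 0 < q b := fun b => (smoothFloor_pos hc).trans_le (hrq b)
  have hq1 : ∑ b, q b = 1 := sum_smoothDist c hM.2
  have hq_le : ∀ b, q b ≤ 1 := fun b =>
    hq1 ▸ single_le_sum (fun b _ => (hq b).le) (mem_univ b)
  have hball := le_sum_ball_mixChannel hW x hWD hf ht₀ ht₁
  have htail := sum_filter_llr_gt_le hmix (smoothFloor_pos hc) hrq hq_le x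
    (mul_pos hnpos hδ)
  have hchange := sum_prod_sub_le_rpow_mul_sum hn (fun a => (hmix a).1) hq hq1.le x
    (univ.filter fun z : Fin n → Xh => dSeq d x z ≤ n * D)
    (∑ i, klDiv2 (mixChannel t W f (x i)) q + n * δ)
  have hmean : ∑ i, klDiv2 (mixChannel t W f (x i)) q
      ≤ n * (mutInf2 (empDist x) W + c - t * logb 2 (smoothFloor Xh c)) :=
    sum_klDiv2_mixChannel_le hn x hW f hc ht₀ ht₁
  have hC : n * C / (n * δ) ^ 2 = C / (n * δ ^ 2) := by field_simp
  calc t - C / (n * δ ^ 2) ≤ _ := by linarith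
    _ ≤ _ := hchange
    _ ≤ _ := mul_le_mul_of_nonneg_right (rpow_le_rpow_of_exponent_le one_le_two (by linarith))
        (sum_nonneg fun z _ => by positivity)

lemma eventually_le_rpow_mul_sum_ball {d : X → Xh → ℝ} {D : ℝ}
    (hcover : ∀ a, ∃ b, d a b ≤ D) {ε : ℝ} (hε : 0 < ε) :
    ∃ κ > 0, ∀ᶠ n : ℕ in atTop, ∀ x : Fin n → X,
      κ ≤ 2 ^ (n * (RD d D (empDist x) + ε))
        * ∑ z ∈ univ.filter (fun z : Fin n → Xh => dSeq d x z ≤ n * D),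
            (2 : ℝ) ^ (-(n : ℝ) * empEnt z) := by
  set δ := ε / 4 with hδ_def
  have hδ : 0 < δ := by positivity
  have hlogr : logb 2 (smoothFloor Xh δ) ≤ 0 := by
    refine logb_nonpos one_lt_two (smoothFloor_pos hδ).le ?_
    have : 0 < (2 : ℝ) ^ (-δ) := by positivity
    have : (1 : ℝ) ≤ Fintype.card Xh := by exact_mod_cast Fintype.card_pos
    exact div_le_one_of_le₀ (by linarith) (by linarith)
  obtain ⟨t, ht₀, ht₁, ht⟩ : ∃ t : ℝ, 0 < t ∧ t ≤ 1 ∧ -(t * logb 2 (smoothFloor Xh δ)) ≤ δ := by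
    have hpos : 0 < δ - logb 2 (smoothFloor Xh δ) := by linarith
    refine ⟨δ / (δ - logb 2 (smoothFloor Xh δ)), div_pos hδ hpos,
      div_le_one_of_le₀ (by linarith) hpos.le, ?_⟩
    rw [← mul_neg, div_mul_eq_mul_div, div_le_iff₀ hpos]
    nlinarith
  obtain ⟨C, hC⟩ : ∃ C, C = 8 * Fintype.card Xh / log 2 ^ 2 + 2 * logb 2 (smoothFloor Xh δ) ^ 2 :=
    ⟨_, rfl⟩
  refine ⟨t / 2, by positivity, ?_⟩
  filter_upwards [(tendsto_const_div_atTop_nhds_zero_nat (C / δ ^ 2)).eventually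
    (gt_mem_nhds (half_pos ht₀)), eventually_ne_atTop 0] with n hCn hn x
  obtain ⟨W, hW, hWD, hWR⟩ := exists_mutInf2_lt_RD_add hcover (isPMF_empDist hn x) hδ
  choose f hf using fun a => Finite.exists_min (d a)
  have h := le_rpow_mul_sum_ball hn d D x hW hWD hf hδ ht₀.le ht₁ hδ
  rw [← hC] at h
  rw [div_div, mul_comm] at hCn
  calc t / 2 ≤ _ := by linarith
    _ ≤ _ := h
    _ ≤ _ := mul_le_mul_of_nonneg_right (rpow_le_rpow_of_exponent_le one_le_two (by nlinarith))
        (sum_nonneg fun z _ => by positivity)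

end LowerBound

section Normalisation

variable {X Xh : Type*} [Fintype Xh] {n : ℕ}

lemma univDistBall_eq_div (d : X → Xh → ℝ) (D : ℝ) (x : Fin n → X) :
    univDistBall d D x = (∑ z ∈ univ.filter (fun z : Fin n → Xh => dSeq d x z ≤ n * D),
      (2 : ℝ) ^ (-(n : ℝ) * empEnt z)) / ∑ z : Fin n → Xh, (2 : ℝ) ^ (-(n : ℝ) * empEnt z) := by
  rw [univDistBall, sum_div]
  rfl

variable [Nonempty Xh]

lemma sum_ball_le_mul_univDistBall (hn : n ≠ 0) (d : X → Xh → ℝ) (D : ℝ) (x : Fin n → X) :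
    ∑ z ∈ univ.filter (fun z : Fin n → Xh => dSeq d x z ≤ n * D), (2 : ℝ) ^ (-(n : ℝ) * empEnt z)
      ≤ (n + 1) ^ Fintype.card Xh * univDistBall d D x := by
  have hZ : 0 < ∑ z : Fin n → Xh, (2 : ℝ) ^ (-(n : ℝ) * empEnt z) :=
    one_pos.trans_le (one_le_sum_rpow_neg_mul_empEnt (α := Xh) hn)
  rw [univDistBall_eq_div, mul_div_assoc', le_div_iff₀ hZ, mul_comm]
  exact mul_le_mul_of_nonneg_right (sum_rpow_neg_mul_empEnt_le hn)
    (sum_nonneg fun z _ => by positivity)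

variable [Fintype X]

lemma univDistBall_le (hn : n ≠ 0) (d : X → Xh → ℝ) (D : ℝ) (x : Fin n → X) :
    univDistBall d D x
      ≤ (n + 1) ^ Fintype.card (X × Xh) * 2 ^ (-(n : ℝ) * RD d D (empDist x)) := by
  rw [univDistBall_eq_div]
  exact (div_le_self (sum_nonneg fun z _ => by positivity)
    (one_le_sum_rpow_neg_mul_empEnt hn)).trans (sum_ball_rpow_le hn d D x)

end Normalisation

theorem univDist_ball_exponent_general {X Xh : Type*} [Fintype X] [Fintype Xh]
    (d : X → Xh → ℝ) (D : ℝ)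
    (hcover : ∀ x : X, ∃ xh : Xh, d x xh ≤ D) :
    ∀ ε > 0, ∃ N : ℕ, ∀ n ≥ N, ∀ x : Fin n → X,
      |(1 / (n : ℝ)) * Real.logb 2 (univDistBall d D x) + RD d D (empDist x)| < ε := by
  intro ε hε
  rcases isEmpty_or_nonempty Xh with hXh | hXh
  · exact ⟨1, fun n hn x => isEmptyElim (hcover (x ⟨0, hn⟩)).choose⟩
  obtain ⟨κ, hκ, hball⟩ := eventually_le_rpow_mul_sum_ball hcover (half_pos hε)
  obtain ⟨N, hN⟩ := eventually_atTop.1 <| hball.and <|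
    (eventually_mul_logb_add_lt (Fintype.card (X × Xh)) 0 hε).and <|
    (eventually_mul_logb_add_lt (Fintype.card Xh) (-logb 2 κ) (half_pos hε)).and
      (eventually_ne_atTop 0)
  refine ⟨N, fun n hnN x => ?_⟩
  obtain ⟨hlow, h₁, h₂, hn⟩ := hN n hnN
  refine abs_div_logb_add_lt (A₁ := ((n : ℝ) + 1) ^ Fintype.card (X × Xh))
    (A₂ := ((n : ℝ) + 1) ^ Fintype.card Xh) (by positivity) hκ (by positivity) (by positivity)
    (univDistBall_le hn d D x) ?_ (by rw [logb_pow]; linarith) (by rw [logb_pow]; linarith)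
  rw [mul_assoc]
  exact (hlow x).trans
    (mul_le_mul_of_nonneg_left (sum_ball_le_mul_univDistBall hn d D x) (by positivity))

/-- Uniformly in `x ∈ 𝒳ⁿ`, the probability that a single guess drawn from the
universal distribution `P̃` lands within distortion `D` of `x` is `2^{-n R(D, P̂_x)}` up to
sub-exponential factors:
`lim_{n→∞} max_{x ∈ 𝒳ⁿ} |(1/n) log₂ P̃[S(x)] + R(D, P̂_x)| = 0`. -/
theorem univDist_ball_exponent {X Xh : Type*} [Fintype X] [Fintype Xh]
    (d : X → Xh → ℝ) (hd : ∀ x xh, 0 ≤ d x xh) (D : ℝ) (hD : 0 ≤ D)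
    (hcover : ∀ x : X, ∃ xh : Xh, d x xh ≤ D) :
    ∀ ε > 0, ∃ N : ℕ, ∀ n ≥ N, ∀ x : Fin n → X,
      |(1 / (n : ℝ)) * Real.logb 2 (univDistBall d D x) + RD d D (empDist x)| < ε :=
  univDist_ball_exponent_general d D hcover
end

section
/- Let Q be the law of a stationary process over the finite alphabet 𝒳 with Ψ-mixing coefficient Ψ(·), let K, k, m be positive integers with Ψ(k) < 1, set n = m(K+k), and let x ∈ 𝒳^n with blocks x̲₁,…,x̲_m. If the K-dimensional marginal Q^K satisfies Q^K(x̲_i) > 0 for every i, then (1−Ψ(k))^{m−1} · 2^{−m [D(P̂^K_x‖Q^K) + Ĥ^K_x]} ≤ Q(G^K_x) ≤ (1+Ψ(k))^{m−1} · 2^{−m [D(P̂^K_x‖Q^K) + Ĥ^K_x]}, where D(·‖·) is base-2 Kullback–Leibler divergence on 𝒳^K. -/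
open scoped BigOperators Classical
open Filter

/-- The `i`-th length-`K` block of a sequence of length `m(K+k)` parsed into `m` blocks of
length `K` separated by gaps of length `k`. -/
def blockOf {X : Type*} {K k m : ℕ} (x : Fin (m * (K + k)) → X) (i : Fin m) :
    Fin K → X := fun j =>
  x ⟨i.1 * (K + k) + j.1, by
    have hi : i.1 + 1 ≤ m := i.2
    calc i.1 * (K + k) + j.1 < i.1 * (K + k) + (K + k) := by omega
      _ = (i.1 + 1) * (K + k) := by ring
      _ ≤ m * (K + k) := Nat.mul_le_mul_right _ hi⟩

/-- The `K`-type of `x`: the empirical distribution on `𝒳^K` of its `m` blocks. -/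
noncomputable def kType {X : Type*} [Fintype X] {K k m : ℕ}
    (x : Fin (m * (K + k)) → X) : (Fin K → X) → ℝ :=
  empDist (fun i : Fin m => blockOf x i)

section Mixing

/-- The left shift on two-sided trajectories. -/
def shiftMap {X : Type*} (ω : ℤ → X) : ℤ → X := fun i => ω (i + 1)

/-- The σ-algebra generated by the coordinates `X_i`, `i ≤ 0` (the past). -/
def pastSigma (X : Type*) [MeasurableSpace X] : MeasurableSpace (ℤ → X) :=
  MeasurableSpace.comap (fun (ω : ℤ → X) (i : {i : ℤ // i ≤ 0}) => ω i.1) MeasurableSpace.pi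

/-- The σ-algebra generated by the coordinates `X_i`, `i ≥ k` (the `k`-future). -/
def futureSigma (X : Type*) [MeasurableSpace X] (k : ℕ) : MeasurableSpace (ℤ → X) :=
  MeasurableSpace.comap (fun (ω : ℤ → X) (i : {i : ℤ // (k : ℤ) ≤ i}) => ω i.1)
    MeasurableSpace.pi

end Mixing

section AuxProof

open MeasureTheory

lemma two_rpow_eq_prod {Y : Type*} [Fintype Y] {m : ℕ} (hm : 0 < m) (y : Fin m → Y)
    (Q : Y → ℝ) (hQ : ∀ i, 0 < Q (y i)) :
    (2:ℝ) ^ (-(m:ℝ) * (klDiv2 (empDist y) Q + empEnt y)) = ∏ i, Q (y i) := by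
  have hfiber : ∀ a : Y, (Finset.univ.filter (fun i => y i = a)).Nonempty → 0 < Q a := by
    intro a ⟨i, hi⟩
    obtain ⟨-, rfl⟩ := Finset.mem_filter.1 hi
    exact hQ i
  have hsum : klDiv2 (empDist y) Q + empEnt y = -∑ a, empDist y a * Real.logb 2 (Q a) := by
    unfold klDiv2 empEnt
    rw [← sub_eq_add_neg, ← Finset.sum_sub_distrib, ← Finset.sum_neg_distrib]
    refine Finset.sum_congr rfl fun a _ => ?_
    by_cases hPa : empDist y a = 0
    · simp [hPa]
    · have hQa : Q a ≠ 0 := by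
        refine (hfiber a ?_).ne'
        rw [Finset.filter_nonempty_iff]
        by_contra h
        push_neg at h
        apply hPa
        unfold empDist
        rw [Finset.filter_false_of_mem (fun i hi => h i hi)]
        simp
      rw [Real.logb_div hPa hQa]; ring
  rw [hsum]
  have h2 : -(m:ℝ) * -∑ a, empDist y a * Real.logb 2 (Q a)
      = ∑ a, ((Finset.univ.filter (fun i => y i = a)).card : ℝ) * Real.logb 2 (Q a) := by
    rw [neg_mul_neg, Finset.mul_sum]
    refine Finset.sum_congr rfl fun a _ => ?_
    unfold empDist
    have : (m:ℝ) ≠ 0 := Nat.cast_ne_zero.2 hm.ne'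
    field_simp
  rw [h2, Real.rpow_sum_of_pos two_pos]
  rw [← Finset.prod_fiberwise' Finset.univ y (fun a => Q a)]
  refine Finset.prod_congr rfl fun a _ => ?_
  rw [Finset.prod_const]
  by_cases hc : (Finset.univ.filter (fun i => y i = a)).card = 0
  · simp [hc]
  · have hQa : 0 < Q a := hfiber a (Finset.card_ne_zero.1 hc)
    rw [mul_comm, Real.rpow_mul (by norm_num : (0:ℝ) ≤ 2),
      Real.rpow_logb two_pos (by norm_num) hQa, Real.rpow_natCast]

lemma shift_iterate {X : Type*} (s : ℕ) (ω : ℤ → X) (i : ℤ) :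
    (shiftMap^[s]) ω i = ω (i + s) := by
  induction s generalizing ω with
  | zero => simp
  | succ n ih =>
    rw [Function.iterate_succ_apply, ih (shiftMap ω)]
    show ω (i + n + 1) = _
    congr 1; push_cast; ring

variable {X : Type*} [MeasurableSpace X] [MeasurableSingletonClass X]

lemma measurableSet_cyl {ι : Type*} [Countable ι] (c : ι → ℤ) (v : ι → X) :
    MeasurableSet {ω : ℤ → X | ∀ i, ω (c i) = v i} := by
  have : {ω : ℤ → X | ∀ i, ω (c i) = v i}
      = ⋂ i, (fun ω : ℤ → X => ω (c i)) ⁻¹' {v i} := by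
    ext ω; simp [Set.mem_iInter]
  rw [this]
  exact MeasurableSet.iInter fun i =>
    (measurable_pi_apply _) (MeasurableSet.singleton _)

lemma measurableSet_past {ι : Type*} [Countable ι] (c : ι → ℤ) (hc : ∀ i, c i ≤ 0)
    (v : ι → X) :
    MeasurableSet[pastSigma X] {ω : ℤ → X | ∀ i, ω (c i) = v i} := by
  refine MeasurableSpace.measurableSet_comap.2
    ⟨{p : {i : ℤ // i ≤ 0} → X | ∀ i, p ⟨c i, hc i⟩ = v i}, ?_, rfl⟩
  have : {p : {i : ℤ // i ≤ 0} → X | ∀ i, p ⟨c i, hc i⟩ = v i}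
      = ⋂ i, (fun p : {i : ℤ // i ≤ 0} → X => p ⟨c i, hc i⟩) ⁻¹' {v i} := by
    ext p; simp [Set.mem_iInter]
  rw [this]
  exact MeasurableSet.iInter fun i =>
    (measurable_pi_apply _) (MeasurableSet.singleton _)

lemma measurableSet_future {ι : Type*} [Countable ι] (k : ℕ) (c : ι → ℤ)
    (hc : ∀ i, (k : ℤ) ≤ c i) (v : ι → X) :
    MeasurableSet[futureSigma X k] {ω : ℤ → X | ∀ i, ω (c i) = v i} := by
  refine MeasurableSpace.measurableSet_comap.2
    ⟨{p : {i : ℤ // (k:ℤ) ≤ i} → X | ∀ i, p ⟨c i, hc i⟩ = v i}, ?_, rfl⟩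
  have : {p : {i : ℤ // (k:ℤ) ≤ i} → X | ∀ i, p ⟨c i, hc i⟩ = v i}
      = ⋂ i, (fun p : {i : ℤ // (k:ℤ) ≤ i} → X => p ⟨c i, hc i⟩) ⁻¹' {v i} := by
    ext p; simp [Set.mem_iInter]
  rw [this]
  exact MeasurableSet.iInter fun i =>
    (measurable_pi_apply _) (MeasurableSet.singleton _)

lemma mix_bounds {r a b ψ : ℝ} (ha : 0 < a) (hb : 0 < b) (h : |r / (a*b) - 1| ≤ ψ) :
    (1 - ψ) * (a*b) ≤ r ∧ r ≤ (1 + ψ) * (a*b) := by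
  rw [abs_le] at h
  have hab : 0 < a*b := mul_pos ha hb
  constructor
  · have h1 : 1 - ψ ≤ r / (a*b) := by linarith [h.1]
    calc (1-ψ) * (a*b) ≤ (r/(a*b)) * (a*b) := by nlinarith
    _ = r := by field_simp
  · have h2 : r / (a*b) ≤ 1 + ψ := by linarith [h.2]
    calc r = (r/(a*b)) * (a*b) := by field_simp
    _ ≤ (1+ψ) * (a*b) := by nlinarith

lemma meas_shift_cyl (μ : Measure (ℤ → X)) (hstat : MeasurePreserving (shiftMap (X := X)) μ μ)
    {ι : Type*} [Countable ι] (s : ℕ) (c : ι → ℤ) (v : ι → X) :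
    μ {ω | ∀ i, ω (c i + s) = v i} = μ {ω | ∀ i, ω (c i) = v i} := by
  have h := (hstat.iterate s).measure_preimage (measurableSet_cyl c v).nullMeasurableSet
  rw [← h]
  congr 1
  ext ω
  simp only [Set.mem_preimage, Set.mem_setOf_eq, shift_iterate]

lemma meas_shift_cyl' (μ : Measure (ℤ → X)) (hstat : MeasurePreserving (shiftMap (X := X)) μ μ)
    {ι : Type*} [Countable ι] (s : ℕ) (c : ι → ℤ) (v : ι → X) :
    μ {ω | ∀ i, ω (c i) = v i} = μ {ω | ∀ i, ω (c i - s) = v i} := by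
  rw [← meas_shift_cyl μ hstat s (fun i => c i - s) v]
  congr 1
  ext ω
  simp only [Set.mem_setOf_eq, sub_add_cancel]

end AuxProof

/-- The event that all blocks with index `< t` take their prescribed values. -/
def Aev {X : Type*} {K k m : ℕ} (x : Fin (m * (K + k)) → X) (t : ℕ) : Set (ℤ → X) :=
  {ω | ∀ p : {p : Fin m × Fin K // p.1.1 < t},
    ω ((p.1.1.1 * (K + k) + p.1.2.1 : ℕ) : ℤ) = blockOf x p.1.1 p.1.2}

lemma mem_Aev {X : Type*} {K k m : ℕ} (x : Fin (m * (K + k)) → X) (t : ℕ) (ω : ℤ → X) :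
    ω ∈ Aev x t ↔ ∀ (i : Fin m), i.1 < t → ∀ j : Fin K,
      ω ((i.1 * (K + k) + j.1 : ℕ) : ℤ) = blockOf x i j := by
  constructor
  · intro h i hi j; exact h ⟨(i, j), hi⟩
  · intro h p; exact h p.1.1 p.2 p.1.2


open MeasureTheory in
/-- For a stationary `Ψ`-mixing process `μ` over the finite alphabet `𝒳`
(the hypothesis `hΨ` states that `Ψ` is the mixing coefficient bound: for all `k`, events `A`
of the past and `B` of the `k`-future with positive probability satisfy
`|μ(A∩B)/(μ(A)μ(B)) − 1| ≤ Ψ(k)`), if `Ψ(k) < 1` and the `K`-marginal gives positive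
probability to each of the `m` blocks of `x ∈ 𝒳ⁿ`, `n = m(K+k)`, then the probability of the
gaps-oblivious set `G^K_x` satisfies
`(1−Ψ(k))^{m−1} 2^{−m[D(P̂ᴷ_x‖Qᴷ)+Ĥᴷ_x]} ≤ μ(G^K_x) ≤ (1+Ψ(k))^{m−1} 2^{−m[D(P̂ᴷ_x‖Qᴷ)+Ĥᴷ_x]}`. -/
theorem psi_mixing_gap_oblivious_probability
    {X : Type*} [Fintype X] [MeasurableSpace X] [DiscreteMeasurableSpace X]
    (μ : Measure (ℤ → X)) [IsProbabilityMeasure μ]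
    (hstat : MeasurePreserving (shiftMap (X := X)) μ μ)
    (Ψ : ℕ → ℝ)
    (hΨ : ∀ (k : ℕ) (A B : Set (ℤ → X)),
      MeasurableSet[pastSigma X] A → MeasurableSet[futureSigma X k] B →
      0 < μ A → 0 < μ B →
      |(μ (A ∩ B)).toReal / ((μ A).toReal * (μ B).toReal) - 1| ≤ Ψ k)
    (K k m : ℕ) (hK : 0 < K) (hk : 0 < k) (hm : 0 < m) (hΨk : Ψ k < 1)
    (x : Fin (m * (K + k)) → X)
    (hpos : ∀ i : Fin m,
      0 < (μ {ω : ℤ → X | ∀ j : Fin K, ω (j.1 : ℤ) = blockOf x i j}).toReal) :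
    (1 - Ψ k) ^ (m - 1) *
        (2 : ℝ) ^ (-(m : ℝ) *
          (klDiv2 (kType x)
              (fun a : Fin K → X => (μ {ω : ℤ → X | ∀ j : Fin K, ω (j.1 : ℤ) = a j}).toReal) +
            empEnt (fun i : Fin m => blockOf x i))) ≤
      (μ {ω : ℤ → X | ∀ (i : Fin m) (j : Fin K),
          ω ((i.1 * (K + k) + j.1 : ℕ) : ℤ) = blockOf x i j}).toReal ∧
    (μ {ω : ℤ → X | ∀ (i : Fin m) (j : Fin K),
          ω ((i.1 * (K + k) + j.1 : ℕ) : ℤ) = blockOf x i j}).toReal ≤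
      (1 + Ψ k) ^ (m - 1) *
        (2 : ℝ) ^ (-(m : ℝ) *
          (klDiv2 (kType x)
              (fun a : Fin K → X => (μ {ω : ℤ → X | ∀ j : Fin K, ω (j.1 : ℤ) = a j}).toReal) +
            empEnt (fun i : Fin m => blockOf x i))) := by
  classical
  have hψ0 : 0 ≤ Ψ k := by
    have hu1 : MeasurableSet[pastSigma X] (Set.univ : Set (ℤ → X)) := MeasurableSet.univ
    have hu2 : MeasurableSet[futureSigma X k] (Set.univ : Set (ℤ → X)) := MeasurableSet.univ
    have h := hΨ k Set.univ Set.univ hu1 hu2 (by simp) (by simp)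
    simpa using h
  have hψ1 : 0 < 1 - Ψ k := by linarith
  set Qb : ℕ → ℝ := fun i => if h : i < m then
      (μ {ω : ℤ → X | ∀ j : Fin K, ω (j.1 : ℤ) = blockOf x ⟨i, h⟩ j}).toReal
    else 1 with hQb
  have hQbpos : ∀ i, 0 < Qb i := by
    intro i
    simp only [hQb]
    by_cases h : i < m
    · rw [dif_pos h]; exact hpos ⟨i, h⟩
    · rw [dif_neg h]; norm_num
  have toRealPos : ∀ S : Set (ℤ → X), 0 < (μ S).toReal → 0 < μ S :=
    fun S h => (ENNReal.toReal_pos_iff.mp h).1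
  have main : ∀ t : ℕ, 1 ≤ t → t ≤ m →
      (1 - Ψ k) ^ (t - 1) * ∏ i ∈ Finset.range t, Qb i ≤ (μ (Aev x t)).toReal ∧
      (μ (Aev x t)).toReal ≤ (1 + Ψ k) ^ (t - 1) * ∏ i ∈ Finset.range t, Qb i := by
    intro t
    induction t with
    | zero => intro h; exact absurd h (by omega)
    | succ n ih =>
      intro _ hsm
      by_cases hn0 : n = 0
      · subst hn0
        norm_num
        have hA1 : Aev x 1 = {ω : ℤ → X | ∀ j : Fin K, ω (j.1 : ℤ) = blockOf x ⟨0, hm⟩ j} := by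
          ext ω
          constructor
          · intro h
            intro j
            have h0 := (mem_Aev x 1 ω).1 h ⟨0, hm⟩ Nat.one_pos j
            simpa using h0
          · intro h
            rw [mem_Aev]
            intro i hi j
            have hi0 : i = ⟨0, hm⟩ := by
              apply Fin.ext
              simp only
              omega
            subst hi0
            simpa using h j
        have hval : (μ (Aev x 1)).toReal = Qb 0 := by
          rw [hA1]
          simp only [hQb]
          rw [dif_pos hm]
        rw [hval]
        constructor <;> simp
      · have hn1 : 1 ≤ n := by omega
        have hnm : n < m := by omega
        obtain ⟨ihl, ihu⟩ := ih hn1 (le_of_lt hnm)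
        set bt : Fin K → X := blockOf x ⟨n, hnm⟩ with hbt
        set cA : {p : Fin m × Fin K // p.1.1 < n} → ℤ :=
          fun p => ((p.1.1.1 * (K + k) + p.1.2.1 : ℕ) : ℤ) with hcA
        set vA : {p : Fin m × Fin K // p.1.1 < n} → X :=
          fun p => blockOf x p.1.1 p.1.2 with hvA
        set cE : Fin K → ℤ := fun j => ((n * (K + k) + j.1 : ℕ) : ℤ) with hcE
        set Eev : Set (ℤ → X) := {ω | ∀ j : Fin K, ω (cE j) = bt j} with hE
        set s₀ : ℕ := (n - 1) * (K + k) + (K - 1) with hs₀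
        set A' : Set (ℤ → X) :=
          {ω | ∀ p : {p : Fin m × Fin K // p.1.1 < n}, ω (cA p - s₀) = vA p} with hA'
        set B' : Set (ℤ → X) := {ω | ∀ j : Fin K, ω (cE j - s₀) = bt j} with hB'
        -- splitting
        have hsplit : Aev x (n + 1) = Aev x n ∩ Eev := by
          ext ω
          simp only [Set.mem_inter_iff, mem_Aev, hE, Set.mem_setOf_eq]
          constructor
          · intro h
            refine ⟨fun i hi j => h i (by omega) j, fun j => ?_⟩
            have h1 := h ⟨n, hnm⟩ (n.lt_succ_self) j
            rw [hbt, hcE]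
            exact h1
          · rintro ⟨h1, h2⟩ i hi j
            rcases Nat.lt_succ_iff_lt_or_eq.1 hi with h | h
            · exact h1 i h j
            · have hieq : i = ⟨n, hnm⟩ := Fin.ext h
              subst hieq
              have h3 := h2 j
              rw [hbt, hcE] at h3
              exact h3
        -- measure identities via stationarity
        have hμA : μ (Aev x n) = μ A' := meas_shift_cyl' μ hstat s₀ cA vA
        have hμE : μ Eev = μ B' := meas_shift_cyl' μ hstat s₀ cE bt
        have hμEQ : μ Eev = μ {ω : ℤ → X | ∀ j : Fin K, ω (j.1 : ℤ) = bt j} := by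
          have hsh := meas_shift_cyl μ hstat (n * (K + k)) (fun j : Fin K => (j.1 : ℤ)) bt
          rw [← hsh]
          congr 1
          ext ω
          have hc : ∀ j : Fin K, cE j = (j.1 : ℤ) + ((n * (K + k) : ℕ) : ℤ) := by
            intro j; rw [hcE]; push_cast; ring
          simp only [hE, Set.mem_setOf_eq, hc]
        have hμI : μ (Aev x n ∩ Eev) = μ (A' ∩ B') := by
          have h1 : Aev x n ∩ Eev
              = {ω : ℤ → X | ∀ q : {p : Fin m × Fin K // p.1.1 < n} ⊕ Fin K,
                  ω (Sum.elim cA cE q) = Sum.elim vA bt q} := by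
            ext ω
            constructor
            · rintro ⟨h1, h2⟩ q
              cases q with
              | inl p => exact h1 p
              | inr j => exact h2 j
            · intro h
              exact ⟨fun p => h (Sum.inl p), fun j => h (Sum.inr j)⟩
          have h2 : A' ∩ B'
              = {ω : ℤ → X | ∀ q : {p : Fin m × Fin K // p.1.1 < n} ⊕ Fin K,
                  ω (Sum.elim cA cE q - s₀) = Sum.elim vA bt q} := by
            ext ω
            constructor
            · rintro ⟨h1, h2⟩ q
              cases q with
              | inl p => exact h1 p
              | inr j => exact h2 j
            · intro h
              exact ⟨fun p => h (Sum.inl p), fun j => h (Sum.inr j)⟩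
          rw [h1, h2]
          exact meas_shift_cyl' μ hstat s₀ (Sum.elim cA cE) (Sum.elim vA bt)
        -- σ-algebra memberships
        have hpast : MeasurableSet[pastSigma X] A' := by
          rw [hA']
          refine measurableSet_past (fun p => cA p - s₀) (fun p => ?_) vA
          have hle : p.1.1.1 * (K + k) + p.1.2.1 ≤ s₀ := by
            rw [hs₀]
            have hmul : p.1.1.1 * (K + k) ≤ (n - 1) * (K + k) :=
              Nat.mul_le_mul_right _ (by omega)
            have hj : p.1.2.1 ≤ K - 1 := by
              have := p.1.2.2; omega
            exact add_le_add hmul hj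
          have h4 : cA p ≤ (s₀ : ℤ) := by
            show ((p.1.1.1 * (K + k) + p.1.2.1 : ℕ) : ℤ) ≤ (s₀ : ℤ)
            exact_mod_cast hle
          show cA p - (s₀ : ℤ) ≤ 0
          omega
        have hfut : MeasurableSet[futureSigma X k] B' := by
          rw [hB']
          refine measurableSet_future k (fun j => cE j - s₀) (fun j => ?_) bt
          have hkey : s₀ + (k + 1) = n * (K + k) := by
            rw [hs₀]
            obtain ⟨n', rfl⟩ : ∃ n', n = n' + 1 := ⟨n - 1, by omega⟩
            obtain ⟨K', rfl⟩ : ∃ K', K = K' + 1 := ⟨K - 1, by omega⟩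
            simp only [Nat.add_sub_cancel]
            ring
          have h2 : s₀ + k + 1 ≤ n * (K + k) + j.1 :=
            calc s₀ + k + 1 = s₀ + (k + 1) := by ring
            _ = n * (K + k) := hkey
            _ ≤ n * (K + k) + j.1 := Nat.le_add_right _ _
          have h3 : ((s₀ : ℤ) + k + 1 : ℤ) ≤ cE j := by
            show ((s₀ : ℤ) + k + 1 : ℤ) ≤ ((n * (K + k) + j.1 : ℕ) : ℤ)
            exact_mod_cast h2
          show (k : ℤ) ≤ cE j - (s₀ : ℤ)
          omega
        -- positivity
        have hprodpos : 0 < ∏ i ∈ Finset.range n, Qb i :=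
          Finset.prod_pos fun i _ => hQbpos i
        have hAnpos : 0 < (μ (Aev x n)).toReal :=
          lt_of_lt_of_le (mul_pos (pow_pos hψ1 _) hprodpos) ihl
        have hA'toReal : (μ A').toReal = (μ (Aev x n)).toReal := by rw [hμA]
        have hEvalQ : (μ Eev).toReal = Qb n := by
          rw [hμEQ]
          simp only [hQb]
          rw [dif_pos hnm, hbt]
        have hB'toReal : (μ B').toReal = Qb n := by rw [← hμE, hEvalQ]
        have hA'pos : 0 < μ A' := toRealPos _ (by rw [hA'toReal]; exact hAnpos)
        have hB'pos : 0 < μ B' := toRealPos _ (by rw [hB'toReal]; exact hQbpos n)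
        -- mixing
        have hmix := hΨ k A' B' hpast hfut hA'pos hB'pos
        have hb := mix_bounds (by rw [hA'toReal]; exact hAnpos)
          (by rw [hB'toReal]; exact hQbpos n) hmix
        have hIeq : (μ (Aev x (n + 1))).toReal = (μ (A' ∩ B')).toReal := by
          rw [hsplit, hμI]
        have hpow1 : (1 - Ψ k) ^ (n + 1 - 1) = (1 - Ψ k) ^ (n - 1) * (1 - Ψ k) := by
          rw [← pow_succ]; congr 1; omega
        have hpow2 : (1 + Ψ k) ^ (n + 1 - 1) = (1 + Ψ k) ^ (n - 1) * (1 + Ψ k) := by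
          rw [← pow_succ]; congr 1; omega
        constructor
        · calc (1 - Ψ k) ^ (n + 1 - 1) * ∏ i ∈ Finset.range (n + 1), Qb i
              = ((1 - Ψ k) ^ (n - 1) * ∏ i ∈ Finset.range n, Qb i) * ((1 - Ψ k) * Qb n) := by
                rw [hpow1, Finset.prod_range_succ]; ring
          _ ≤ (μ (Aev x n)).toReal * ((1 - Ψ k) * Qb n) := by
                apply mul_le_mul_of_nonneg_right ihl
                exact mul_nonneg hψ1.le (hQbpos n).le
          _ = (1 - Ψ k) * ((μ A').toReal * (μ B').toReal) := by
                rw [hA'toReal, hB'toReal]; ring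
          _ ≤ (μ (A' ∩ B')).toReal := hb.1
          _ = (μ (Aev x (n + 1))).toReal := hIeq.symm
        · calc (μ (Aev x (n + 1))).toReal = (μ (A' ∩ B')).toReal := hIeq
          _ ≤ (1 + Ψ k) * ((μ A').toReal * (μ B').toReal) := hb.2
          _ = (μ (Aev x n)).toReal * ((1 + Ψ k) * Qb n) := by
                rw [hA'toReal, hB'toReal]; ring
          _ ≤ ((1 + Ψ k) ^ (n - 1) * ∏ i ∈ Finset.range n, Qb i) * ((1 + Ψ k) * Qb n) := by
                apply mul_le_mul_of_nonneg_right ihu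
                exact mul_nonneg (by linarith) (hQbpos n).le
          _ = (1 + Ψ k) ^ (n + 1 - 1) * ∏ i ∈ Finset.range (n + 1), Qb i := by
                rw [hpow2, Finset.prod_range_succ]; ring
  have hmain := main m hm (le_refl m)
  have hGset : {ω : ℤ → X | ∀ (i : Fin m) (j : Fin K),
      ω ((i.1 * (K + k) + j.1 : ℕ) : ℤ) = blockOf x i j} = Aev x m := by
    ext ω
    simp only [Set.mem_setOf_eq, mem_Aev]
    exact ⟨fun h i _ j => h i j, fun h i j => h i i.2 j⟩
  have hprod : ∏ i ∈ Finset.range m, Qb i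
      = ∏ i : Fin m, (μ {ω : ℤ → X | ∀ j : Fin K, ω (j.1 : ℤ) = blockOf x i j}).toReal := by
    rw [← Fin.prod_univ_eq_prod_range]
    refine Finset.prod_congr rfl fun i _ => ?_
    simp only [hQb]
    rw [dif_pos i.2]
  have hexp : (2 : ℝ) ^ (-(m : ℝ) *
      (klDiv2 (kType x)
          (fun a : Fin K → X => (μ {ω : ℤ → X | ∀ j : Fin K, ω (j.1 : ℤ) = a j}).toReal) +
        empEnt (fun i : Fin m => blockOf x i))) = ∏ i ∈ Finset.range m, Qb i := by
    rw [hprod]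
    exact two_rpow_eq_prod hm (fun i : Fin m => blockOf x i) _ hpos
  constructor
  · rw [hexp, hGset]; exact hmain.1
  · rw [hexp, hGset]; exact hmain.2
end
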